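/- Let d ≥ 2. There do not exist unitary matrices W, V ∈ M_d(ℂ) such that for every unitary matrix U ∈ M_d(ℂ) there is a complex number c (depending on U) with W U V = c · U†. -/

import Mathlib

open scoped ComplexOrder Kronecker
open Matrix

noncomputable section

/-- The space of linear maps from `m × m` complex matrices to `n × n` complex matrices. -/
abbrev MatMap (m n : ℕ) := Matrix (Fin m) (Fin m) ℂ →ₗ[ℂ] Matrix (Fin n) (Fin n) ℂ

/-- The Choi matrix `Choi(Q) = Σ_{i,j} Q(E_{ij}) ⊗ E_{ij}` of a linear map between
matrix spaces. -/
def choi {m n : ℕ} (Q : MatMap m n) : Matrix (Fin n × Fin m) (Fin n × Fin m) ℂ :=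
  Matrix.of fun p q => Q (Matrix.single p.2 q.2 1) p.1 q.1

/-- A linear map is completely positive if its Choi matrix is positive semidefinite. -/
def IsCP {m n : ℕ} (Q : MatMap m n) : Prop := (choi Q).PosSemidef

/-- A quantum operation: a completely positive trace-non-increasing linear map. -/
def IsQOp {m n : ℕ} (Q : MatMap m n) : Prop :=
  IsCP Q ∧ ∀ ρ : Matrix (Fin m) (Fin m) ℂ, ρ.PosSemidef → (Q ρ).trace ≤ ρ.trace

/-- A quantum channel: a completely positive trace-preserving linear map. -/
def IsChannel {m n : ℕ} (Q : MatMap m n) : Prop :=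
  IsCP Q ∧ ∀ ρ : Matrix (Fin m) (Fin m) ℂ, (Q ρ).trace = ρ.trace

/-- A density matrix: positive semidefinite with unit trace. -/
def IsDensity {ι : Type*} [Fintype ι] (ρ : Matrix ι ι ℂ) : Prop :=
  ρ.PosSemidef ∧ ρ.trace = 1

/-- A rank-one orthogonal projection `|ψ⟩⟨ψ|` for a unit vector `ψ`. -/
def IsRankOneProj {d : ℕ} (P : Matrix (Fin d) (Fin d) ℂ) : Prop :=
  ∃ ψ : Fin d → ℂ, star ψ ⬝ᵥ ψ = 1 ∧ P = Matrix.vecMulVec ψ (star ψ)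

/-- A state space symmetry: a bijection between the sets of density matrices that
preserves convex combinations. -/
def IsStateSymmetry {ι κ : Type*} [Fintype ι] [Fintype κ]
    (S : Matrix ι ι ℂ → Matrix κ κ ℂ) : Prop :=
  Set.BijOn S {ρ | IsDensity ρ} {ρ | IsDensity ρ} ∧
  ∀ ρ σ : Matrix ι ι ℂ, IsDensity ρ → IsDensity σ → ∀ p : ℝ, 0 ≤ p → p ≤ 1 →
    S ((p : ℂ) • ρ + ((1 - p : ℝ) : ℂ) • σ) = (p : ℂ) • S ρ + ((1 - p : ℝ) : ℂ) • S σ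

/-- An operation space symmetry: a bijection between the sets of quantum operations that
preserves convex combinations and maps the zero map to the zero map. -/
def IsOpSymmetry {m n m' n' : ℕ} (S : MatMap m n → MatMap m' n') : Prop :=
  Set.BijOn S {Q | IsQOp Q} {Q | IsQOp Q} ∧
  (∀ Q R : MatMap m n, IsQOp Q → IsQOp R → ∀ p : ℝ, 0 ≤ p → p ≤ 1 →
    S ((p : ℂ) • Q + ((1 - p : ℝ) : ℂ) • R) = (p : ℂ) • S Q + ((1 - p : ℝ) : ℂ) • S R) ∧
  S 0 = 0

/-- Transport of a square matrix along an equality of dimensions. -/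
def castMat {m n : ℕ} (h : m = n) (A : Matrix (Fin m) (Fin m) ℂ) :
    Matrix (Fin n) (Fin n) ℂ :=
  Matrix.reindex (finCongr h) (finCongr h) A

/-- The unitary channel `ρ ↦ U ρ U†` as a linear map. -/
def adjAction {d : ℕ} (U : Matrix (Fin d) (Fin d) ℂ) : MatMap d d where
  toFun ρ := U * ρ * Uᴴ
  map_add' x y := by simp [Matrix.mul_add, Matrix.add_mul]
  map_smul' c x := by simp [Matrix.mul_smul, Matrix.smul_mul]

/-- The Hilbert–Schmidt adjoint of a linear map between matrix spaces; it is the unique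
linear map satisfying `Tr[A† Q(B)] = Tr[(Q†(A))† B]` for all `A`, `B`. -/
def hsAdjoint {m n : ℕ} (Q : MatMap m n) : MatMap n m where
  toFun A := Matrix.of fun i j => ((Q (Matrix.single i j 1))ᴴ * A).trace
  map_add' A B := by
    ext i j
    simp [Matrix.mul_add, Matrix.trace_add]
  map_smul' c A := by
    ext i j
    simp [Matrix.mul_smul, Matrix.trace_smul]

open scoped Classical in
/-- The positive semidefinite square root (junk value `0` on non-psd inputs). -/
noncomputable def psqrt {d : ℕ} (M : Matrix (Fin d) (Fin d) ℂ) : Matrix (Fin d) (Fin d) ℂ :=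
  if h : M.PosSemidef then
    (h.1.eigenvectorUnitary : Matrix (Fin d) (Fin d) ℂ) *
      Matrix.diagonal ((↑) ∘ (√·) ∘ h.1.eigenvalues) *
      (star h.1.eigenvectorUnitary : Matrix (Fin d) (Fin d) ℂ) else 0

/-- The fidelity `F(ρ,σ) = (Tr[√(√ρ σ √ρ)])²` of two density matrices. -/
noncomputable def fidelity {d : ℕ} (ρ σ : Matrix (Fin d) (Fin d) ℂ) : ℝ :=
  ((psqrt (psqrt ρ * σ * psqrt ρ)).trace.re) ^ 2

/-- The double transpose `ρ ↦ [Φ(ρᵀ)]ᵀ` of a linear map between matrix spaces. -/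
def doubleTransposeMap {m n : ℕ} (Φ : MatMap m n) : MatMap m n where
  toFun ρ := (Φ ρᵀ)ᵀ
  map_add' x y := by simp
  map_smul' c x := by simp

/-- A time symmetric quantum operation: completely positive, with `Q†(I_n) ≤ I_m`
and `Q(I_m/m) ≤ I_n/n` in the Loewner order. -/
def IsTSOp {m n : ℕ} (Q : MatMap m n) : Prop :=
  IsCP Q ∧ ((1 : Matrix (Fin m) (Fin m) ℂ) - hsAdjoint Q 1).PosSemidef ∧
    ((n : ℂ)⁻¹ • (1 : Matrix (Fin n) (Fin n) ℂ)
      - Q ((m : ℂ)⁻¹ • (1 : Matrix (Fin m) (Fin m) ℂ))).PosSemidef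

/-!
If `W U V = c(U) • Uᴴ` for every unitary `U`, then `U ↦ W U V` equals, up to scalars, both the
anti-multiplicative map `U ↦ Uᴴ` and (since `W V` is a scalar) the multiplicative map
`U ↦ V⁻¹ U V`. Hence any two unitaries would commute up to a scalar, which fails for
`diag(1, i, 1, …)` and the transposition of the first two basis vectors.
-/

namespace Matrix

variable {n α : Type*} [Fintype n] [DecidableEq n]

lemma ne_zero_of_smul_mem_unitaryGroup [Nonempty n] [CommRing α] [StarRing α] [Nontrivial α]
    {c : α} {M : Matrix n n α} (h : c • M ∈ unitaryGroup n α) : c ≠ 0 := by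
  rintro rfl
  rw [zero_smul, mem_unitaryGroup_iff, star_zero, mul_zero] at h
  exact zero_ne_one h

lemma mul_eq_sandwich_mul_sandwich [CommRing α] [StarRing α] {W V : Matrix n n α}
    (hW : W ∈ unitaryGroup n α) (hV : V ∈ unitaryGroup n α) (X Y : Matrix n n α) :
    W * (X * Y) * V = (W * X * V) * (star V * star W) * (W * Y * V) := by
  have hVV : V * star V = 1 := mem_unitaryGroup_iff.mp hV
  have hWW : star W * W = 1 := mem_unitaryGroup_iff'.mp hW
  calc W * (X * Y) * V = W * X * (V * star V) * (star W * W) * Y * V := by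
        rw [hVV, hWW]; simp only [mul_one, mul_assoc]
    _ = _ := by simp only [mul_assoc]

lemma exists_mul_eq_smul_mul_of_sandwich_eq_smul_conjTranspose [Nonempty n] [Field α] [StarRing α]
    {W V : Matrix n n α} (hW : W ∈ unitaryGroup n α) (hV : V ∈ unitaryGroup n α)
    (h : ∀ U ∈ unitaryGroup n α, ∃ c : α, W * U * V = c • Uᴴ)
    {X Y : Matrix n n α} (hX : X ∈ unitaryGroup n α) (hY : Y ∈ unitaryGroup n α) :
    ∃ c : α, X * Y = c • (Y * X) := by
  have hXY : Yᴴ * Xᴴ ∈ unitaryGroup n α := mul_mem (Unitary.star_mem hY) (Unitary.star_mem hX)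
  obtain ⟨c₀, h₀⟩ := h 1 (one_mem _)
  obtain ⟨c₁, h₁⟩ := h Yᴴ (Unitary.star_mem hY)
  obtain ⟨c₂, h₂⟩ := h Xᴴ (Unitary.star_mem hX)
  obtain ⟨c₃, h₃⟩ := h (Yᴴ * Xᴴ) hXY
  rw [mul_one, conjTranspose_one] at h₀
  rw [conjTranspose_conjTranspose] at h₁ h₂
  rw [conjTranspose_mul, conjTranspose_conjTranspose, conjTranspose_conjTranspose] at h₃
  have hc₃ : c₃ ≠ 0 := ne_zero_of_smul_mem_unitaryGroup (h₃ ▸ mul_mem (mul_mem hW hXY) hV)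
  have hVW : star V * star W = star c₀ • 1 := by rw [← star_mul, h₀, star_smul, star_one]
  refine ⟨c₃⁻¹ * (c₁ * star c₀ * c₂), ?_⟩
  calc X * Y = c₃⁻¹ • (W * (Yᴴ * Xᴴ) * V) := by rw [h₃, smul_smul, inv_mul_cancel₀ hc₃, one_smul]
    _ = _ := by
      rw [mul_eq_sandwich_mul_sandwich hW hV, h₁, hVW, h₂]
      simp only [Matrix.smul_mul, Matrix.mul_smul, Matrix.mul_one, smul_smul, mul_assoc]
      congr 1
      ring

lemma permMatrix_mem_unitaryGroup [CommRing α] [StarRing α] (σ : Equiv.Perm n) :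
    σ.permMatrix α ∈ unitaryGroup n α := by
  rw [mem_unitaryGroup_iff', star_eq_conjTranspose, conjTranspose_permMatrix, ← permMatrix_mul,
    mul_inv_cancel, permMatrix_one]

lemma diagonal_mem_unitaryGroup [CommRing α] [StarRing α] {a : n → α}
    (ha : ∀ k, star (a k) * a k = 1) : diagonal a ∈ unitaryGroup n α := by
  rw [mem_unitaryGroup_iff', star_eq_conjTranspose, diagonal_conjTranspose, diagonal_mul_diagonal]
  exact diagonal_eq_one.mpr (funext ha)

lemma exists_unitary_forall_mul_ne_smul_mul {i j : n} (hij : i ≠ j) :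
    ∃ X ∈ unitaryGroup n ℂ, ∃ Y ∈ unitaryGroup n ℂ, ∀ c : ℂ, X * Y ≠ c • (Y * X) := by
  set a : n → ℂ := Function.update 1 j Complex.I
  set σ := Equiv.swap i j
  refine ⟨diagonal a, diagonal_mem_unitaryGroup fun k => ?_, σ.permMatrix ℂ,
    permMatrix_mem_unitaryGroup σ, fun c hc => ?_⟩
  · by_cases hk : k = j <;> simp [a, hk]
  · have hij' := congrFun (congrFun hc i) j
    have hji' := congrFun (congrFun hc j) i
    simp only [diagonal_mul, mul_diagonal, smul_apply, smul_eq_mul, PEquiv.toMatrix_apply,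
      Equiv.toPEquiv_apply, Option.mem_def, Equiv.swap_apply_left, Equiv.swap_apply_right,
      Function.update_self, Function.update_of_ne hij, Pi.one_apply, ↓reduceIte, mul_one, one_mul,
      a, σ] at hij' hji'
    rw [← hji', Complex.I_mul_I] at hij'
    norm_num at hij'

end Matrix

/-- For `d ≥ 2`, there are no fixed unitaries `W`, `V` with `W U V = c·U†` (for some
phase `c` depending on `U`) for every unitary `U`. -/
theorem no_sandwich_adjoint (d : ℕ) (hd : 2 ≤ d) :
    ¬ ∃ W ∈ Matrix.unitaryGroup (Fin d) ℂ, ∃ V ∈ Matrix.unitaryGroup (Fin d) ℂ,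
        ∀ U ∈ Matrix.unitaryGroup (Fin d) ℂ, ∃ c : ℂ, W * U * V = c • Uᴴ := by
  rintro ⟨W, hW, V, hV, h⟩
  have : Nonempty (Fin d) := ⟨⟨0, by omega⟩⟩
  obtain ⟨X, hX, Y, hY, hXY⟩ := exists_unitary_forall_mul_ne_smul_mul
    (i := (⟨0, by omega⟩ : Fin d)) (j := ⟨1, by omega⟩) (by simp)
  obtain ⟨c, hc⟩ := exists_mul_eq_smul_mul_of_sandwich_eq_smul_conjTranspose hW hV h hX hY
  exact hXY c hc
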